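/- arXiv:1910.07744 — 10 statements merged into one kernel-verified Lean document; each statement's English description precedes it below -/
import Mathlib

section
/- Let S and S' be finite subsets of ℤ³ with 0 ∉ S and 0 ∉ S', and suppose that S ∪ (−S) generates ℤ³ as a group and S' ∪ (−S') generates ℤ³ as a group (so the associated graphs are connected). Let G(S) denote the simple graph with vertex set ℤ³ in which distinct points x, y are adjacent if and only if x − y ∈ S ∪ (−S), and define G(S') similarly. Then G(S) and G(S') are isomorphic as graphs if and only if there exists a ℤ-linear automorphism X of ℤ³ (i.e. an integer matrix X ∈ GL(3,ℤ)) such that X(S ∪ (−S)) = S' ∪ (−S'). -/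
/-!
An isomorphism `e : G(S) ≃g G(S')` carries the neighbours `x + c` (`c ∈ S ∪ -S`) of `x`
bijectively onto the neighbours `e x + c'` (`c' ∈ S' ∪ -S'`) of `e x`. Consequently, for each
`v`, the increment `x ↦ e (x + v) - e x` is harmonic for the walk with steps `S ∪ -S`, and it
takes only finitely many values, since `v` is a sum of steps. An integer-valued bounded harmonic
function attains its maximum, and at a maximum all neighbours are maximal too, so it is constant.
Hence `e - e 0` is additive: it is a lattice automorphism carrying `S ∪ -S` onto `S' ∪ -S'`.
-/

/-- The lattice net graph on `ℤ³` determined by a set `S` of edge vectors: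
`x` and `y` are adjacent iff `x ≠ y` and `x - y ∈ S ∪ (-S)`. -/
def latticeGraph (S : Finset (Fin 3 → ℤ)) : SimpleGraph (Fin 3 → ℤ) where
  Adj x y := x ≠ y ∧ (x - y ∈ S ∨ y - x ∈ S)
  symm := ⟨fun _ _ h => ⟨h.1.symm, h.2.symm⟩⟩
  loopless := ⟨fun _ h => h.1 rfl⟩

open Finset

section Harmonic

variable {G H : Type*}

def IsHarmonic [Add G] [AddCommMonoid H] (T : Finset G) (f : G → H) : Prop :=
  ∀ x, ∑ c ∈ T, f (x + c) = #T • f x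

theorem IsHarmonic.apply [Add G] {ι : Type*} {T : Finset G} {f : G → ι → ℤ}
    (hf : IsHarmonic T f) (i : ι) : IsHarmonic T (f · i) := fun x => by
  simpa only [Finset.sum_apply, Pi.smul_apply] using congrFun (hf x) i

theorem IsHarmonic.eq_of_bddAbove [AddGroup G] {T : Finset G} {f : G → ℤ}
    (hf : IsHarmonic T f) (hT : AddSubmonoid.closure (T : Set G) = ⊤)
    (hbdd : BddAbove (Set.range f)) (x y : G) : f x = f y := by
  obtain ⟨x₀, hx₀⟩ := Int.csSup_mem (Set.range_nonempty f) hbdd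
  have hle : ∀ x, f x ≤ f x₀ := fun x => hx₀ ▸ le_csSup hbdd ⟨x, rfl⟩
  have step : ∀ x, f x = f x₀ → ∀ c ∈ T, f (x + c) = f x₀ := by
    intro x hx c hc
    by_contra hne
    have hlt : ∑ d ∈ T, f (x + d) < ∑ _d ∈ T, f x₀ :=
      sum_lt_sum (fun d _ => hle _) ⟨c, hc, lt_of_le_of_ne (hle _) hne⟩
    rw [hf x, hx, sum_const] at hlt
    exact lt_irrefl _ hlt
  have spread : ∀ y x, f x = f x₀ → f (x + y) = f x₀ := fun y =>
    AddSubmonoid.closure_induction (motive := fun y _ => ∀ x, f x = f x₀ → f (x + y) = f x₀)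
      (fun c hc x hx => step x hx c hc)
      (fun x hx => by rwa [add_zero]) (fun y z _ _ hy hz x hx => by
        rw [← add_assoc]; exact hz _ (hy x hx)) (hT ▸ AddSubmonoid.mem_top y)
  have hconst : ∀ x, f x = f x₀ := fun x => by
    simpa using spread (-x₀ + x) x₀ rfl
  rw [hconst x, hconst y]

theorem isHarmonic_sub_translate [AddCommGroup G] [AddCommGroup H] {T : Finset G} {f : G → H}
    {σ : H} (hf : ∀ x, ∑ c ∈ T, (f (x + c) - f x) = σ) (v : G) :
    IsHarmonic T (fun x => f (x + v) - f x) := fun x =>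
  calc ∑ c ∈ T, (f (x + c + v) - f (x + c))
      = ∑ c ∈ T, ((f (x + v + c) - f (x + v)) - (f (x + c) - f x) + (f (x + v) - f x)) :=
        sum_congr rfl fun c _ => by rw [add_right_comm]; abel
    _ = #T • (f (x + v) - f x) := by
        rw [sum_add_distrib, sum_sub_distrib, hf, hf, sum_const, sub_self, zero_add]

end Harmonic

section Increments

open Pointwise

variable {G H : Type*} [AddCommGroup G] [AddCommGroup H]

theorem finite_range_sub_translate [DecidableEq H] {T : Set G} {T' : Finset H}
    (hT : AddSubmonoid.closure T = ⊤) {f : G → H} (hf : ∀ x, ∀ c ∈ T, f (x + c) - f x ∈ T')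
    (v : G) : (Set.range fun x => f (x + v) - f x).Finite := by
  obtain ⟨n, hn⟩ : ∃ n : ℕ, ∀ x, f (x + v) - f x ∈ n • T' := by
    refine AddSubmonoid.closure_induction
      (motive := fun v _ => ∃ n : ℕ, ∀ x, f (x + v) - f x ∈ n • T')
      (fun c hc => ⟨1, fun x => ?_⟩) ⟨0, fun x => ?_⟩
      (fun v w _ _ ⟨m, hm⟩ ⟨n, hn⟩ => ⟨m + n, fun x => ?_⟩) (hT ▸ AddSubmonoid.mem_top v)
    · rw [one_nsmul]; exact hf x c hc
    · simp
    · rw [add_nsmul, ← add_assoc, ← sub_add_sub_cancel _ (f (x + v)), add_comm]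
      exact add_mem_add (hn (x + v)) (hm x)
  exact (n • T').finite_toSet.subset (Set.range_subset_iff.mpr hn)

theorem map_add_sub_map_eq_of_bijOn {ι : Type*} {T : Finset G} {T' : Finset (ι → ℤ)}
    (hT : AddSubmonoid.closure (T : Set G) = ⊤) {f : G → ι → ℤ}
    (hf : ∀ x, Set.BijOn (fun c => f (x + c) - f x) T T') (x v : G) :
    f (x + v) - f x = f v - f 0 := by
  classical
  have hsum : ∀ x, ∑ c ∈ T, (f (x + c) - f x) = ∑ c' ∈ T', c' := fun x =>
    sum_nbij _ (hf x).mapsTo (hf x).injOn (hf x).surjOn fun _ _ => rfl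
  have hfin := finite_range_sub_translate hT (fun x _ hc => (hf x).mapsTo hc) v
  funext i
  have hbdd : BddAbove (Set.range fun x => (f (x + v) - f x) i) := by
    simpa only [← Set.range_comp'] using (hfin.image (· i)).bddAbove
  simpa using ((isHarmonic_sub_translate hsum v).apply i).eq_of_bddAbove hT hbdd x 0

theorem exists_addEquiv_image_eq_of_bijOn {ι : Type*} {T : Finset G} {T' : Finset (ι → ℤ)}
    (e : G ≃ (ι → ℤ)) (hT : AddSubmonoid.closure (T : Set G) = ⊤)
    (he : ∀ x, Set.BijOn (fun c => e (x + c) - e x) T T') :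
    ∃ X : G ≃+ (ι → ℤ), X '' T = T' := by
  refine ⟨AddEquiv.mk' (e.trans (Equiv.subRight (e 0))) fun a b => ?_, ?_⟩
  · simp only [Equiv.trans_apply, Equiv.subRight_apply]
    rw [← sub_add_sub_cancel (e (a + b)) (e a), map_add_sub_map_eq_of_bijOn hT he, add_comm]
  · convert (he 0).image_eq using 2
    rw [zero_add]; rfl

end Increments

theorem SimpleGraph.Iso.bijOn_sub {V : Type*} [AddCommGroup V] {Γ Γ' : SimpleGraph V}
    {T T' : Set V} (hΓ : ∀ x y, Γ.Adj x y ↔ y - x ∈ T) (hΓ' : ∀ x y, Γ'.Adj x y ↔ y - x ∈ T')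
    (e : Γ ≃g Γ') (x : V) : Set.BijOn (fun c => e (x + c) - e x) T T' := by
  refine ⟨fun c hc => ?_, fun c _ c' _ h => ?_, fun c' hc' => ?_⟩
  · refine (hΓ' _ _).mp (e.map_adj_iff.mpr ((hΓ _ _).mpr ?_))
    rwa [add_sub_cancel_left]
  · exact add_left_cancel (e.injective (sub_left_injective h))
  · have hadj : Γ'.Adj (e x) (e x + c') := (hΓ' _ _).mpr (by rwa [add_sub_cancel_left])
    have hadj' : Γ.Adj x (e.symm (e x + c')) := by
      simpa using e.symm.map_adj_iff.mpr hadj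
    exact ⟨_, (hΓ _ _).mp hadj', by simp⟩

theorem AddSubmonoid.closure_union_neg_eq_top {G : Type*} [AddGroup G] {s : Set G}
    (h : AddSubgroup.closure (s ∪ -s) = ⊤) : AddSubmonoid.closure (s ∪ -s) = ⊤ := by
  rw [AddSubgroup.closure_union, AddSubgroup.closure_neg, sup_idem] at h
  rw [← AddSubgroup.closure_toAddSubmonoid, h, AddSubgroup.top_toAddSubmonoid]

section LatticeGraph

variable {S S' : Finset (Fin 3 → ℤ)}

theorem latticeGraph_adj_iff {x y : Fin 3 → ℤ} :
    (latticeGraph S).Adj x y ↔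
      x ≠ y ∧ y - x ∈ (S : Set (Fin 3 → ℤ)) ∪ -(S : Set (Fin 3 → ℤ)) := by
  simp only [latticeGraph, Set.mem_union, mem_coe, Set.mem_neg, neg_sub, or_comm]

theorem latticeGraph_adj_iff_of_zero_notMem (hS0 : (0 : Fin 3 → ℤ) ∉ S) (x y : Fin 3 → ℤ) :
    (latticeGraph S).Adj x y ↔ y - x ∈ (S : Set (Fin 3 → ℤ)) ∪ -(S : Set (Fin 3 → ℤ)) := by
  refine latticeGraph_adj_iff.trans ⟨And.right, fun h => ⟨?_, h⟩⟩
  rintro rfl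
  simp [hS0] at h

def latticeGraphIsoOfImageEq (X : (Fin 3 → ℤ) ≃ₗ[ℤ] (Fin 3 → ℤ))
    (hX : X '' ((S : Set (Fin 3 → ℤ)) ∪ -(S : Set (Fin 3 → ℤ))) =
      (S' : Set (Fin 3 → ℤ)) ∪ -(S' : Set (Fin 3 → ℤ))) :
    latticeGraph S ≃g latticeGraph S' where
  toEquiv := X.toEquiv
  map_rel_iff' {x y} := by
    simp only [LinearEquiv.coe_toEquiv, latticeGraph_adj_iff, ← hX, ← map_sub,
      X.injective.mem_set_image, X.injective.ne_iff]

end LatticeGraph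

open Pointwise in
theorem exists_addEquiv_image_eq_of_latticeGraph_iso {S S' : Finset (Fin 3 → ℤ)}
    (hS0 : (0 : Fin 3 → ℤ) ∉ S) (hS'0 : (0 : Fin 3 → ℤ) ∉ S')
    (hSgen : AddSubgroup.closure ((S : Set (Fin 3 → ℤ)) ∪ -(S : Set (Fin 3 → ℤ))) = ⊤)
    (e : latticeGraph S ≃g latticeGraph S') :
    ∃ X : (Fin 3 → ℤ) ≃+ (Fin 3 → ℤ), X '' ((S : Set (Fin 3 → ℤ)) ∪ -(S : Set (Fin 3 → ℤ))) =
      (S' : Set (Fin 3 → ℤ)) ∪ -(S' : Set (Fin 3 → ℤ)) := by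
  have hbij := e.bijOn_sub (latticeGraph_adj_iff_of_zero_notMem hS0)
    (latticeGraph_adj_iff_of_zero_notMem hS'0)
  simpa using exists_addEquiv_image_eq_of_bijOn (T := S ∪ -S) (T' := S' ∪ -S') e.toEquiv
    (by simpa using AddSubmonoid.closure_union_neg_eq_top hSgen) (by simpa using hbij)

theorem stmt0_general (S S' : Finset (Fin 3 → ℤ))
    (hS0 : (0 : Fin 3 → ℤ) ∉ S) (hS'0 : (0 : Fin 3 → ℤ) ∉ S')
    (hSgen : AddSubgroup.closure ((S : Set (Fin 3 → ℤ)) ∪ -(S : Set (Fin 3 → ℤ))) = ⊤) :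
    Nonempty (latticeGraph S ≃g latticeGraph S') ↔
      ∃ X : (Fin 3 → ℤ) ≃ₗ[ℤ] (Fin 3 → ℤ),
        X '' ((S : Set (Fin 3 → ℤ)) ∪ -(S : Set (Fin 3 → ℤ))) =
          (S' : Set (Fin 3 → ℤ)) ∪ -(S' : Set (Fin 3 → ℤ)) := by
  refine ⟨fun ⟨e⟩ => ?_, fun ⟨X, hX⟩ => ⟨latticeGraphIsoOfImageEq X hX⟩⟩
  obtain ⟨X, hX⟩ := exists_addEquiv_image_eq_of_latticeGraph_iso hS0 hS'0 hSgen e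
  exact ⟨X.toIntLinearEquiv, hX⟩

theorem stmt0 (S S' : Finset (Fin 3 → ℤ))
    (hS0 : (0 : Fin 3 → ℤ) ∉ S) (hS'0 : (0 : Fin 3 → ℤ) ∉ S')
    (hSgen : AddSubgroup.closure ((S : Set (Fin 3 → ℤ)) ∪ -(S : Set (Fin 3 → ℤ))) = ⊤)
    (hS'gen : AddSubgroup.closure ((S' : Set (Fin 3 → ℤ)) ∪ -(S' : Set (Fin 3 → ℤ))) = ⊤) :
    Nonempty (latticeGraph S ≃g latticeGraph S') ↔
      ∃ X : (Fin 3 → ℤ) ≃ₗ[ℤ] (Fin 3 → ℤ),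
        X '' ((S : Set (Fin 3 → ℤ)) ∪ -(S : Set (Fin 3 → ℤ))) =
          (S' : Set (Fin 3 → ℤ)) ∪ -(S' : Set (Fin 3 → ℤ)) :=
  stmt0_general S S' hS0 hS'0 hSgen
end

section
/- Let Λ be a set of nonzero vectors in ℤ³ all of whose coordinates lie in {−1, 0, 1}, with Λ ∩ (−Λ) = ∅. Suppose that the family of closed segments { [v, v + λ] : v ∈ ℤ³, λ ∈ Λ } in ℝ³ is pairwise essentially disjoint, i.e. any two distinct segments of the family intersect at most in a point that is an endpoint of both. Then |Λ| ≤ 7. -/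
/-!
If two elements `l ≠ l'` of `Λ` have the same support, then `l ≠ -l'` and all nonzero coordinates
are `±1`, so `l - l' = 2v` for an integer vector `v`. The segments `[0, l]` and `[v, v + l']` then
share their midpoint `l / 2`, which is an endpoint of neither; and they are distinct, since a
segment `[w, w + l']` contains no lattice points besides its endpoints. Hence the support map is
injective on `Λ` and misses `∅`, giving `|Λ| ≤ 2ⁿ - 1` in `ℤⁿ`.
-/

/-- The real vector in `ℝ³` corresponding to an integer vector in `ℤ³`. -/
def intVec (m : Fin 3 → ℤ) : Fin 3 → ℝ := fun i => (m i : ℝ)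

open Finset

variable {ι : Type*}

abbrev castVec : (ι → ℤ) →+ (ι → ℝ) := (Int.castAddHom ℝ).compLeft ι

theorem castVec_injective : Function.Injective (castVec : (ι → ℤ) → ι → ℝ) :=
  fun _ _ h => funext fun i => Int.cast_injective (congrFun h i)

abbrev latticeSegment (v l : ι → ℤ) : Set (ι → ℝ) :=
  segment ℝ (castVec v) (castVec v + castVec l)

theorem eq_or_eq_add_of_castVec_mem_latticeSegment {v l w : ι → ℤ} {i : ι} (hi : IsUnit (l i))
    (hw : castVec w ∈ latticeSegment v l) : w = v ∨ w = v + l := by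
  rw [latticeSegment, segment_eq_image', add_sub_cancel_left] at hw
  obtain ⟨t, ⟨ht0, ht1⟩, hwt⟩ := hw
  have hcoord (j : ι) : (w j : ℝ) = v j + t * l j := by
    simpa using (congrFun hwt j).symm
  obtain ⟨k, rfl⟩ : ∃ k : ℤ, t = k := by
    have hsq : (l i : ℝ) * l i = 1 := by exact_mod_cast Int.isUnit_mul_self hi
    exact ⟨(w i - v i) * l i, by push_cast; rw [hcoord i]; linear_combination -t * hsq⟩
  have hk : k = 0 ∨ k = 1 := by
    have : 0 ≤ k ∧ k ≤ 1 := ⟨by exact_mod_cast ht0, by exact_mod_cast ht1⟩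
    omega
  have hwk (j : ι) : w j = v j + k * l j := by exact_mod_cast hcoord j
  rcases hk with rfl | rfl
  · left; ext j; simpa using hwk j
  · right; ext j; simpa using hwk j

theorem even_sub_of_support_eq {l l' : ι → ℤ} (hl : ∀ i, l i = -1 ∨ l i = 0 ∨ l i = 1)
    (hl' : ∀ i, l' i = -1 ∨ l' i = 0 ∨ l' i = 1) (hsupp : ∀ i, l i = 0 ↔ l' i = 0) :
    Even (l - l') :=
  ⟨fun i => (l i - l' i) / 2, funext fun i => by
    have := hl i; have := hl' i; have := hsupp i; simp only [Pi.sub_apply, Pi.add_apply]; omega⟩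

theorem midpoint_latticeSegment_eq {l l' v : ι → ℤ} (h : l - l' = v + v) :
    midpoint ℝ (castVec 0) (castVec 0 + castVec l) =
      midpoint ℝ (castVec v) (castVec v + castVec l') := by
  have : castVec l = castVec v + castVec v + castVec l' := by
    rw [← map_add, ← map_add, ← h, sub_add_cancel]
  rw [midpoint_eq_smul_add, midpoint_eq_smul_add, this, map_zero]
  congr 1; abel

def EssentiallyDisjointTranslates (Λ : Set (ι → ℤ)) : Prop :=
  ∀ v v' : ι → ℤ, ∀ l ∈ Λ, ∀ l' ∈ Λ, latticeSegment v l ≠ latticeSegment v' l' →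
    ∀ p, p ∈ latticeSegment v l → p ∈ latticeSegment v' l' →
      (p = castVec v ∨ p = castVec v + castVec l) ∧ (p = castVec v' ∨ p = castVec v' + castVec l')

theorem EssentiallyDisjointTranslates.eq_or_eq_neg_of_support_eq {Λ : Set (ι → ℤ)}
    (hΛ : EssentiallyDisjointTranslates Λ) {l l' : ι → ℤ} (hl : l ∈ Λ) (hl' : l' ∈ Λ)
    (hl0 : l ≠ 0) (hlc : ∀ i, l i = -1 ∨ l i = 0 ∨ l i = 1)
    (hlc' : ∀ i, l' i = -1 ∨ l' i = 0 ∨ l' i = 1) (hsupp : ∀ i, l i = 0 ↔ l' i = 0) :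
    l' = l ∨ l' = -l := by
  obtain ⟨v, hv⟩ := even_sub_of_support_eq hlc hlc' hsupp
  obtain ⟨i, hi⟩ : ∃ i, l i ≠ 0 := Function.ne_iff.mp hl0
  have hunit : IsUnit (l' i) := by
    have := hlc' i; have := (hsupp i).not.mp hi
    exact Int.isUnit_iff.mpr (by omega)
  have hcast0 : castVec 0 ≠ castVec 0 + castVec l := by
    simpa [eq_comm] using castVec_injective.ne hl0
  -- The two segments cross at their common midpoint, which is an endpoint of neither.
  have hseg : latticeSegment 0 l = latticeSegment v l' := by
    by_contra hne
    have hmid := midpoint_latticeSegment_eq hv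
    rcases (hΛ 0 v l hl l' hl' hne _ (midpoint_mem_segment _ _)
      (hmid ▸ midpoint_mem_segment _ _)).1 with h | h
    · exact hcast0 ((midpoint_eq_left_iff ℝ).mp h)
    · exact hcast0 ((midpoint_eq_right_iff ℝ).mp h)
  have hleft : castVec 0 ∈ latticeSegment v l' := hseg ▸ left_mem_segment ℝ _ _
  have hright : castVec l ∈ latticeSegment v l' := by
    rw [← hseg, latticeSegment, map_zero, zero_add]
    exact right_mem_segment ℝ _ _
  rcases eq_or_eq_add_of_castVec_mem_latticeSegment hunit hleft,
    eq_or_eq_add_of_castVec_mem_latticeSegment hunit hright with ⟨rfl | h0, h | h⟩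
  · exact absurd h hl0
  · simp [h]
  · exact .inr (by rw [h, eq_neg_iff_add_eq_zero, add_comm, h0])
  · exact absurd (h.trans h0.symm) hl0

theorem EssentiallyDisjointTranslates.card_le [Fintype ι] {Λ : Finset (ι → ℤ)}
    (hΛ : EssentiallyDisjointTranslates (Λ : Set (ι → ℤ))) (hne : ∀ l ∈ Λ, l ≠ 0)
    (hcoord : ∀ l ∈ Λ, ∀ i, l i = -1 ∨ l i = 0 ∨ l i = 1) (hneg : ∀ l ∈ Λ, -l ∉ Λ) :
    #Λ ≤ 2 ^ Fintype.card ι - 1 := by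
  classical
  let supp (l : ι → ℤ) : Finset ι := {i | l i ≠ 0}
  have hmaps : Set.MapsTo supp Λ ((univ : Finset (Finset ι)).erase ∅) := fun l hl => by
    simpa [supp, filter_eq_empty_iff, funext_iff] using hne l hl
  have hinj : Set.InjOn supp Λ := fun l hl l' hl' h => by
    have hsupp (i : ι) : l i = 0 ↔ l' i = 0 := by
      simpa [supp, Finset.ext_iff] using (Finset.ext_iff.mp h i).not
    rcases hΛ.eq_or_eq_neg_of_support_eq hl hl' (hne l hl) (hcoord l hl) (hcoord l' hl') hsupp
      with h | h
    · exact h.symm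
    · exact absurd (h ▸ hl') (hneg l hl)
  calc #Λ ≤ #((univ : Finset (Finset ι)).erase ∅) := card_le_card_of_injOn supp hmaps hinj
    _ = 2 ^ Fintype.card ι - 1 := by
      rw [card_erase_of_mem (mem_univ _), card_univ, Fintype.card_finset]

theorem stmt3 (Λ : Finset (Fin 3 → ℤ))
    (hne : ∀ l ∈ Λ, l ≠ 0)
    (hcoord : ∀ l ∈ Λ, ∀ i, l i = -1 ∨ l i = 0 ∨ l i = 1)
    (hneg : ∀ l ∈ Λ, -l ∉ Λ)
    (hdisj : ∀ v v' : Fin 3 → ℤ, ∀ l ∈ Λ, ∀ l' ∈ Λ,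
      segment ℝ (intVec v) (intVec v + intVec l) ≠
        segment ℝ (intVec v') (intVec v' + intVec l') →
      ∀ p, p ∈ segment ℝ (intVec v) (intVec v + intVec l) →
        p ∈ segment ℝ (intVec v') (intVec v' + intVec l') →
        (p = intVec v ∨ p = intVec v + intVec l) ∧
        (p = intVec v' ∨ p = intVec v' + intVec l')) :
    Λ.card ≤ 7 :=
  -- `intVec` is `castVec` on `Fin 3` by definition, so `hdisj` is literally the hypothesis.
  EssentiallyDisjointTranslates.card_le hdisj hne hcoord hneg
end

section
/- Let q ∈ ℝ³ with q ∉ ℤ³, and let Λ be a set of vectors in ℤ³ all of whose coordinates lie in {−1, 0, 1}. Suppose that the family of closed segments { [q + v, λ + v] : v ∈ ℤ³, λ ∈ Λ } in ℝ³ is pairwise essentially disjoint, i.e. any two distinct segments of the family intersect at most in a point that is an endpoint of both. Then |Λ| ≤ 8. -/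
section Segment

variable {E : Type*} [AddCommGroup E] [Module ℝ E]

theorem eq_or_eq_of_segment_eq {a b c d : E} (h : segment ℝ a b = segment ℝ c d) :
    a = c ∨ a = d := by
  by_cases hab : a = b
  · subst hab
    have hc : c ∈ segment ℝ a a := h ▸ left_mem_segment ℝ c d
    rw [segment_same, Set.mem_singleton_iff] at hc
    exact Or.inl hc.symm
  have hc : c ∈ segment ℝ a b := h ▸ left_mem_segment ℝ c d
  have hd : d ∈ segment ℝ a b := h ▸ right_mem_segment ℝ c d
  have ha : a ∈ segment ℝ c d := h ▸ left_mem_segment ℝ a b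
  rw [segment_eq_image'] at hc hd ha
  obtain ⟨s, ⟨hs₀, -⟩, rfl⟩ := hc
  obtain ⟨t, ⟨ht₀, -⟩, rfl⟩ := hd
  obtain ⟨u, ⟨hu₀, hu₁⟩, hu⟩ := ha
  dsimp only at hu
  -- `a` is the point of parameter `(1 - u) s + u t` on `[a, b]`, so that parameter vanishes.
  have hparam : ((1 - u) * s + u * t) • (b - a) = 0 := by
    rw [← sub_eq_zero.2 hu]
    module
  have hzero : (1 - u) * s + u * t = 0 :=
    (smul_eq_zero.1 hparam).resolve_right (sub_ne_zero.2 (Ne.symm hab))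
  obtain ⟨hs, ht⟩ := (add_eq_zero_iff_of_nonneg (by positivity) (by positivity)).1 hzero
  rcases mul_eq_zero.1 hs with hu' | rfl
  · have hu1 : u = 1 := by linarith
    subst hu1
    obtain rfl : t = 0 := by simpa using ht
    simp
  · simp

def SegmentsEssentiallyDisjoint (a b c d : E) : Prop :=
  segment ℝ a b ≠ segment ℝ c d → ∀ p, p ∈ segment ℝ a b → p ∈ segment ℝ c d →
    (p = a ∨ p = b) ∧ (p = c ∨ p = d)

theorem SegmentsEssentiallyDisjoint.eq_or_eq_of_midpoint_eq {a b c d : E}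
    (h : SegmentsEssentiallyDisjoint a b c d) (hm : midpoint ℝ a b = midpoint ℝ c d) :
    a = c ∨ a = d ∨ a = b := by
  by_cases hseg : segment ℝ a b = segment ℝ c d
  · exact (eq_or_eq_of_segment_eq hseg).imp_right Or.inl
  have hmem := (h hseg (midpoint ℝ a b) (midpoint_mem_segment a b)
    (hm ▸ midpoint_mem_segment c d)).1
  right; right
  rcases hmem with hma | hmb
  · exact (midpoint_eq_left_iff ℝ).1 hma
  · exact (midpoint_eq_right_iff ℝ).1 hmb

end Segment

theorem intVec_injective : Function.Injective intVec :=
  fun m n h => funext fun i => by simpa [intVec] using congrFun h i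

theorem exists_eq_add_two_smul_of_parity_eq {l l' : Fin 3 → ℤ}
    (h : (fun i => (l i : ZMod 2)) = fun i => (l' i : ZMod 2)) :
    ∃ v : Fin 3 → ℤ, l' = l + 2 • v := by
  have hdvd i : (2 : ℤ) ∣ l' i - l i :=
    (ZMod.intCast_eq_intCast_iff_dvd_sub _ _ _).1 (congrFun h i)
  choose v hv using hdvd
  exact ⟨v, funext fun i => by
    rw [Pi.add_apply, Pi.smul_apply, two_nsmul]; linarith [hv i]⟩

theorem parity_injOn_of_segmentsEssentiallyDisjoint (q : Fin 3 → ℝ)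
    (hq : ∀ m : Fin 3 → ℤ, q ≠ intVec m) (Λ : Set (Fin 3 → ℤ))
    (hdisj : ∀ v v' : Fin 3 → ℤ, ∀ l ∈ Λ, ∀ l' ∈ Λ, SegmentsEssentiallyDisjoint
      (q + intVec v) (intVec l + intVec v) (q + intVec v') (intVec l' + intVec v')) :
    Set.InjOn (fun (l : Fin 3 → ℤ) i => (l i : ZMod 2)) Λ := by
  intro l hl l' hl' hparity
  obtain ⟨v, rfl⟩ := exists_eq_add_two_smul_of_parity_eq hparity
  have hm : midpoint ℝ (q + intVec v) (intVec l + intVec v) =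
      midpoint ℝ (q + intVec 0) (intVec (l + 2 • v) + intVec 0) := by
    ext i
    simp only [midpoint_eq_smul_add, intVec, Pi.add_apply, Pi.smul_apply, Pi.zero_apply,
      two_nsmul, smul_eq_mul]
    push_cast
    ring
  rcases (hdisj v 0 l hl _ hl').eq_or_eq_of_midpoint_eq hm with h | h | h
  · have hv : v = 0 := intVec_injective (add_left_cancel h)
    simp [hv]
  · refine (hq (l + v) (funext fun i => ?_)).elim
    have hi := congrFun h i
    simp only [intVec, Pi.add_apply, Pi.zero_apply, two_nsmul] at hi ⊢
    push_cast at hi ⊢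
    linarith
  · exact absurd (add_right_cancel h) (hq l)

theorem stmt4_general (q : Fin 3 → ℝ)
    (hq : ∀ m : Fin 3 → ℤ, q ≠ intVec m)
    (Λ : Finset (Fin 3 → ℤ))
    (hdisj : ∀ v v' : Fin 3 → ℤ, ∀ l ∈ Λ, ∀ l' ∈ Λ,
      segment ℝ (q + intVec v) (intVec l + intVec v) ≠
        segment ℝ (q + intVec v') (intVec l' + intVec v') →
      ∀ p, p ∈ segment ℝ (q + intVec v) (intVec l + intVec v) →
        p ∈ segment ℝ (q + intVec v') (intVec l' + intVec v') →
        (p = q + intVec v ∨ p = intVec l + intVec v) ∧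
        (p = q + intVec v' ∨ p = intVec l' + intVec v')) :
    Λ.card ≤ 8 :=
  calc Λ.card ≤ Fintype.card (Fin 3 → ZMod 2) :=
        Finset.card_le_card_of_injOn _ (fun _ _ => Finset.mem_coe.2 (Finset.mem_univ _))
          (parity_injOn_of_segmentsEssentiallyDisjoint q hq Λ hdisj)
    _ = 8 := by simp

theorem stmt4 (q : Fin 3 → ℝ)
    (hq : ∀ m : Fin 3 → ℤ, q ≠ intVec m)
    (Λ : Finset (Fin 3 → ℤ))
    (hcoord : ∀ l ∈ Λ, ∀ i, l i = -1 ∨ l i = 0 ∨ l i = 1)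
    (hdisj : ∀ v v' : Fin 3 → ℤ, ∀ l ∈ Λ, ∀ l' ∈ Λ,
      segment ℝ (q + intVec v) (intVec l + intVec v) ≠
        segment ℝ (q + intVec v') (intVec l' + intVec v') →
      ∀ p, p ∈ segment ℝ (q + intVec v) (intVec l + intVec v) →
        p ∈ segment ℝ (q + intVec v') (intVec l' + intVec v') →
        (p = q + intVec v ∨ p = intVec l + intVec v) ∧
        (p = q + intVec v' ∨ p = intVec l' + intVec v')) :
    Λ.card ≤ 8 :=
  stmt4_general q hq Λ hdisj
end

section
/- Let p ∈ ℝ³, let n ≥ 2 be an integer, and let k, l ∈ ℤ³ be linearly independent vectors such that k − l = n·t for some t ∈ ℤ³. Then the closed segments [p, p + k] and [p + t, p + t + l] are distinct, and the point p + (1/n)k belongs to both segments but is an endpoint of neither. -/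
section Segment

variable {𝕜 E : Type*} [Field 𝕜] [LinearOrder 𝕜] [IsStrictOrderedRing 𝕜]
  [AddCommGroup E] [Module 𝕜 E]

/- `x'` and `y'` both lie on the ray from `x` through `y`, so one of them lies between `x` and
the other; together with `x ∈ [x', y']` this forces `x` to be that one. -/
theorem eq_or_eq_of_segment_eq_s6 {x y x' y' : E} (h : segment 𝕜 x y = segment 𝕜 x' y') :
    x = x' ∨ x = y' := by
  have hx : Wbtw 𝕜 x' x y' := mem_segment_iff_wbtw.1 (h ▸ left_mem_segment 𝕜 x y)
  obtain ⟨a, ⟨ha, -⟩, hx'⟩ : Wbtw 𝕜 x x' y :=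
    mem_segment_iff_wbtw.1 (h.symm ▸ left_mem_segment 𝕜 x' y')
  obtain ⟨b, ⟨hb, -⟩, hy'⟩ : Wbtw 𝕜 x y' y :=
    mem_segment_iff_wbtw.1 (h.symm ▸ right_mem_segment 𝕜 x' y')
  subst hx' hy'
  simp only [AffineMap.lineMap_apply] at hx ⊢
  rcases wbtw_or_wbtw_smul_vadd_of_nonneg x (y -ᵥ x) ha hb with hab | hba
  · exact Or.inl ((wbtw_swap_left_iff 𝕜 _).1 ⟨hab, hx⟩)
  · exact Or.inr ((wbtw_swap_left_iff 𝕜 _).1 ⟨hba, hx.symm⟩)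

theorem add_smul_mem_segment_ne_left_right (x : E) {v : E} (hv : v ≠ 0) {θ : 𝕜}
    (h0 : 0 < θ) (h1 : θ < 1) :
    x + θ • v ∈ segment 𝕜 x (x + v) ∧ x + θ • v ≠ x ∧ x + θ • v ≠ x + v := by
  refine ⟨⟨1 - θ, θ, by linarith, h0.le, by ring, by module⟩, ?_, ?_⟩
  · simpa [h0.ne'] using hv
  · intro h
    have : (θ - 1) • v = 0 := by rw [sub_smul, one_smul, add_left_cancel h, sub_self]
    exact hv ((smul_eq_zero.1 this).resolve_left (sub_ne_zero.2 h1.ne))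

end Segment

theorem LinearIndependent.ne_smul {R M : Type*} [Ring R] [Nontrivial R] [AddCommGroup M]
    [Module R M] {x y : M} (h : LinearIndependent R ![x, y]) (c : R) : x ≠ c • y :=
  fun hxy => one_ne_zero (LinearIndependent.pair_iff.1 h 1 (-c) (by simp [hxy])).1

@[simp]
theorem intVec_eq_zero_iff {m : Fin 3 → ℤ} : intVec m = 0 ↔ m = 0 := by
  simp [funext_iff, intVec]

@[simp]
theorem intVec_add (a b : Fin 3 → ℤ) : intVec (a + b) = intVec a + intVec b := by
  ext i; simp [intVec]

@[simp]
theorem intVec_sub (a b : Fin 3 → ℤ) : intVec (a - b) = intVec a - intVec b := by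
  ext i; simp [intVec]

@[simp]
theorem intVec_zsmul (c : ℤ) (a : Fin 3 → ℤ) : intVec (c • a) = (c : ℝ) • intVec a := by
  ext i; simp [intVec]

theorem stmt6 (p : Fin 3 → ℝ) (n : ℕ) (hn : 2 ≤ n)
    (k l : Fin 3 → ℤ) (hkl : LinearIndependent ℤ ![k, l])
    (t : Fin 3 → ℤ) (ht : k - l = (n : ℤ) • t) :
    segment ℝ p (p + intVec k) ≠
      segment ℝ (p + intVec t) (p + intVec t + intVec l) ∧
    p + (n : ℝ)⁻¹ • intVec k ∈ segment ℝ p (p + intVec k) ∧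
    p + (n : ℝ)⁻¹ • intVec k ∈ segment ℝ (p + intVec t) (p + intVec t + intVec l) ∧
    p + (n : ℝ)⁻¹ • intVec k ≠ p ∧
    p + (n : ℝ)⁻¹ • intVec k ≠ p + intVec k ∧
    p + (n : ℝ)⁻¹ • intVec k ≠ p + intVec t ∧
    p + (n : ℝ)⁻¹ • intVec k ≠ p + intVec t + intVec l := by
  have hn0 : (n : ℝ) ≠ 0 := by positivity
  have hθ0 : 0 < (n : ℝ)⁻¹ := by positivity
  have hθ1 : (n : ℝ)⁻¹ < 1 := inv_lt_one_of_one_lt₀ (by exact_mod_cast hn)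
  have hT : intVec t = (n : ℝ)⁻¹ • (intVec k - intVec l) := by
    rw [← intVec_sub, ht, intVec_zsmul, smul_smul]
    simp [hn0]
  have hq : p + (n : ℝ)⁻¹ • intVec k = p + intVec t + (n : ℝ)⁻¹ • intVec l := by
    rw [hT]; module
  obtain ⟨hk_mem, hk_ne_left, hk_ne_right⟩ := add_smul_mem_segment_ne_left_right p
    (intVec_eq_zero_iff.not.2 (by simpa using hkl.ne_zero 0)) hθ0 hθ1
  obtain ⟨hl_mem, hl_ne_left, hl_ne_right⟩ := add_smul_mem_segment_ne_left_right (p + intVec t)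
    (intVec_eq_zero_iff.not.2 (by simpa using hkl.ne_zero 1)) hθ0 hθ1
  refine ⟨fun hseg => ?_, hk_mem, hq ▸ hl_mem, hk_ne_left, hk_ne_right, hq ▸ hl_ne_left,
    hq ▸ hl_ne_right⟩
  rcases eq_or_eq_of_segment_eq_s6 hseg with h | h
  · have h0 : t = 0 := by simpa using h
    exact hkl.ne_smul 1 (by simpa [h0, sub_eq_zero] using ht)
  · have hneg : t = -l := by
      rw [← add_eq_zero_iff_eq_neg, ← intVec_eq_zero_iff]
      simpa [add_assoc] using h
    exact hkl.ne_smul (1 - n) (by linear_combination (norm := module) ht + (n : ℤ) • hneg)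
end

section
/- Let p, q ∈ ℝ³ and k, l ∈ ℤ³, and suppose the three points p, q + k, q + l are affinely independent (in particular pairwise distinct and not collinear). Let n ≥ 2 be an integer and t ∈ ℤ³ with k − l = n·t. Then the closed segments [p, q + k] and [p + t, q + l + t] are distinct, and the point p + (1/n)(q + k − p) belongs to both segments but is an endpoint of neither. -/
section Segment

variable {𝕜 V : Type*} [Field 𝕜] [LinearOrder 𝕜] [IsStrictOrderedRing 𝕜]
  [AddCommGroup V] [Module 𝕜 V]

theorem add_smul_sub_mem_openSegment {x y : V} {s : 𝕜} (hs₀ : 0 < s) (hs₁ : s < 1) :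
    x + s • (y - x) ∈ openSegment 𝕜 x y := by
  rw [openSegment_eq_image']
  exact ⟨s, ⟨hs₀, hs₁⟩, rfl⟩

theorem ne_left_and_ne_right_of_mem_openSegment {x y z : V} (hxy : x ≠ y)
    (hz : z ∈ openSegment 𝕜 x y) : z ≠ x ∧ z ≠ y :=
  ⟨fun h => hxy (left_mem_openSegment_iff.1 (h ▸ hz)),
    fun h => hxy (right_mem_openSegment_iff.1 (h ▸ hz))⟩

theorem collinear_of_segment_eq_segment_add {p b c τ : V}
    (h : segment 𝕜 p b = segment 𝕜 (p + τ) (c + τ)) : Collinear 𝕜 ({p, b, c} : Set V) := by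
  have hsub : segment 𝕜 p b ⊆ line[𝕜, p, b] :=
    (line[𝕜, p, b]).convex.segment_subset (left_mem_affineSpan_pair 𝕜 p b)
      (right_mem_affineSpan_pair 𝕜 p b)
  have hpτ : p + τ ∈ line[𝕜, p, b] := hsub (h ▸ left_mem_segment 𝕜 _ _)
  have hcτ : c + τ ∈ line[𝕜, p, b] := hsub (h ▸ right_mem_segment 𝕜 _ _)
  have hc : c ∈ line[𝕜, p, b] := by
    have := AffineSubspace.vadd_mem_of_mem_direction
      (AffineSubspace.vsub_mem_direction hcτ hpτ) (left_mem_affineSpan_pair 𝕜 p b)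
    rwa [vsub_eq_sub, vadd_eq_add, add_sub_add_right_eq_sub, sub_add_cancel] at this
  exact collinear_triple_of_mem_affineSpan_pair (left_mem_affineSpan_pair 𝕜 p b)
    (right_mem_affineSpan_pair 𝕜 p b) hc

end Segment

theorem add_inv_smul_sub_eq_add_inv_smul_sub_add {K V : Type*} [DivisionRing K]
    [AddCommGroup V] [Module K V] {p b c τ : V} {n : K} (hn : n ≠ 0) (h : b - c = n • τ) :
    p + n⁻¹ • (b - p) = (p + τ) + n⁻¹ • ((c + τ) - (p + τ)) := by
  rw [show b - p = n • τ + (c - p) by rw [← h]; abel, smul_add, inv_smul_smul₀ hn,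
    add_sub_add_right_eq_sub]
  abel

theorem stmt7 (p q : Fin 3 → ℝ) (k l : Fin 3 → ℤ)
    (hind : AffineIndependent ℝ ![p, q + intVec k, q + intVec l])
    (n : ℕ) (hn : 2 ≤ n) (t : Fin 3 → ℤ) (ht : k - l = (n : ℤ) • t) :
    segment ℝ p (q + intVec k) ≠
      segment ℝ (p + intVec t) (q + intVec l + intVec t) ∧
    p + (n : ℝ)⁻¹ • (q + intVec k - p) ∈ segment ℝ p (q + intVec k) ∧
    p + (n : ℝ)⁻¹ • (q + intVec k - p) ∈
      segment ℝ (p + intVec t) (q + intVec l + intVec t) ∧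
    p + (n : ℝ)⁻¹ • (q + intVec k - p) ≠ p ∧
    p + (n : ℝ)⁻¹ • (q + intVec k - p) ≠ q + intVec k ∧
    p + (n : ℝ)⁻¹ • (q + intVec k - p) ≠ p + intVec t ∧
    p + (n : ℝ)⁻¹ • (q + intVec k - p) ≠ q + intVec l + intVec t := by
  set b := q + intVec k
  set c := q + intVec l
  have hbc : b - c = (n : ℝ) • intVec t := by
    ext i
    simpa [b, c, intVec] using congrArg (fun v => (v i : ℝ)) ht
  have hn₁ : (1 : ℝ) < n := by exact_mod_cast hn
  have hs₀ : (0 : ℝ) < (n : ℝ)⁻¹ := by positivity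
  have hs₁ : (n : ℝ)⁻¹ < 1 := inv_lt_one_of_one_lt₀ hn₁
  have hpb : p ≠ b := hind.injective.ne (show (0 : Fin 3) ≠ 1 by decide)
  have hpc : p + intVec t ≠ c + intVec t :=
    (add_left_injective _).ne (hind.injective.ne (show (0 : Fin 3) ≠ 2 by decide))
  have hX₁ := add_smul_sub_mem_openSegment (x := p) (y := b) hs₀ hs₁
  have hX₂ := add_smul_sub_mem_openSegment (x := p + intVec t) (y := c + intVec t) hs₀ hs₁
  rw [← add_inv_smul_sub_eq_add_inv_smul_sub_add (by positivity) hbc] at hX₂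
  obtain ⟨hX₁p, hX₁b⟩ := ne_left_and_ne_right_of_mem_openSegment hpb hX₁
  obtain ⟨hX₂p, hX₂c⟩ := ne_left_and_ne_right_of_mem_openSegment hpc hX₂
  refine ⟨fun h => ?_, openSegment_subset_segment _ _ _ hX₁, openSegment_subset_segment _ _ _ hX₂,
    hX₁p, hX₁b, hX₂p, hX₂c⟩
  exact affineIndependent_iff_not_collinear_set.1 hind (collinear_of_segment_eq_segment_add h)
end

section
/- Let n = p₁p₂p₃ with positive integers p₁, p₂, p₃, and let q₁, q₂, r₁ be integers with 0 ≤ q₁ < p₂, 0 ≤ q₂ < p₃ and 0 ≤ r₁ < p₃. Let L be the lower triangular 3×3 rational matrix with rows (p₁, 0, 0), (q₁, p₂, 0), (r₁, q₂, p₃). Then the additive subgroup M of ℚ³ generated by the rows of the inverse matrix L⁻¹ contains ℤ³, and the index of ℤ³ in M equals n. -/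
/-!
Regard `L` as an integer matrix `A`. Row `j` of `A * A⁻¹ = 1` reads
`e_j = ∑ₖ A j k • (row k of A⁻¹)`: hence `ℤ³ ≤ M`, and the standard basis has matrix `Aᵀ` in the
basis formed by the rows of `A⁻¹`. The index of one lattice in another is the absolute value of the
determinant of the base change, here `|det A| = p₁ p₂ p₃` as `A` is lower triangular.
-/

/-- The lattice `ℤ³` viewed as an additive subgroup of `ℚ³`. -/
def intLattice : AddSubgroup (Fin 3 → ℚ) :=
  AddSubgroup.closure (Set.range fun m : Fin 3 → ℤ => fun i => (m i : ℚ))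

open Matrix Module

section
variable {ι : Type*} [Fintype ι] [DecidableEq ι]

lemma closure_range_intCast_eq_closure_basisFun :
    AddSubgroup.closure (Set.range fun m : ι → ℤ => fun i => (m i : ℚ)) =
      AddSubgroup.closure (Set.range (Pi.basisFun ℚ ι)) := by
  apply le_antisymm <;> rw [AddSubgroup.closure_le]
  · rintro _ ⟨m, rfl⟩
    have hm : (fun i => (m i : ℚ)) = ∑ i, m i • Pi.basisFun ℚ ι i := by
      ext j; simp [Pi.single_apply]
    simp only [SetLike.mem_coe, hm]
    exact AddSubgroup.sum_mem _ fun i _ =>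
      AddSubgroup.zsmul_mem _ (AddSubgroup.subset_closure (Set.mem_range_self i)) _
  · rintro _ ⟨i, rfl⟩
    refine AddSubgroup.subset_closure (Set.mem_range.2 ⟨Pi.single i 1, ?_⟩)
    ext j; simp [Pi.single_apply]

variable {A : Matrix ι ι ℤ}

lemma isUnit_det_map_intCast (hA : A.det ≠ 0) : IsUnit (A.map (Int.cast : ℤ → ℚ)).det := by
  rw [← Int.cast_det]
  exact isUnit_iff_ne_zero.2 (Int.cast_ne_zero.2 hA)

variable (A) in
noncomputable def rowsInvBasis (hA : A.det ≠ 0) : Basis ι ℚ (ι → ℚ) :=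
  basisOfLinearIndependentOfCardEqFinrank' (A.map (Int.cast : ℤ → ℚ))⁻¹.row
    (linearIndependent_rows_of_isUnit <| (isUnit_iff_isUnit_det _).2 <|
      isUnit_nonsing_inv_det _ (isUnit_det_map_intCast hA))
    (by simp)

lemma coe_rowsInvBasis (hA : A.det ≠ 0) :
    ⇑(rowsInvBasis A hA) = (A.map (Int.cast : ℤ → ℚ))⁻¹.row :=
  coe_basisOfLinearIndependentOfCardEqFinrank' ..

lemma single_eq_sum_smul_rowsInvBasis (hA : A.det ≠ 0) (j : ι) :
    Pi.single j 1 = ∑ k, (A j k : ℚ) • rowsInvBasis A hA k := by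
  have hrow := congrFun (mul_nonsing_inv _ (isUnit_det_map_intCast hA)) j
  ext l
  simpa [coe_rowsInvBasis, Matrix.mul_apply, Matrix.one_apply, Pi.single_apply, eq_comm]
    using (congrFun hrow l).symm

lemma rowsInvBasis_repr_single (hA : A.det ≠ 0) (j : ι) :
    (rowsInvBasis A hA).repr (Pi.single j 1) = fun k => (A j k : ℚ) := by
  rw [single_eq_sum_smul_rowsInvBasis hA j, Basis.repr_sum_self]

lemma det_rowsInvBasis_basisFun (hA : A.det ≠ 0) :
    (rowsInvBasis A hA).det (Pi.basisFun ℚ ι) = A.det := by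
  rw [Basis.det_apply, Int.cast_det, ← Matrix.det_transpose]
  congr 1
  ext i j
  simp [Basis.toMatrix_apply, rowsInvBasis_repr_single]

lemma closure_basisFun_le_closure_rowsInvBasis (hA : A.det ≠ 0) :
    AddSubgroup.closure (Set.range (Pi.basisFun ℚ ι)) ≤
      AddSubgroup.closure (Set.range (rowsInvBasis A hA)) := by
  rw [AddSubgroup.closure_le]
  rintro _ ⟨j, rfl⟩
  rw [SetLike.mem_coe, Pi.basisFun_apply, single_eq_sum_smul_rowsInvBasis hA j]
  refine AddSubgroup.sum_mem _ fun k _ => ?_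
  rw [Int.cast_smul_eq_zsmul]
  exact AddSubgroup.zsmul_mem _ (AddSubgroup.subset_closure (Set.mem_range_self k)) _

theorem closure_intCast_le_closure_rows_inv_and_relIndex (hA : A.det ≠ 0) :
    AddSubgroup.closure (Set.range fun m : ι → ℤ => fun i => (m i : ℚ)) ≤
        AddSubgroup.closure (Set.range (A.map (Int.cast : ℤ → ℚ))⁻¹.row) ∧
      (AddSubgroup.closure (Set.range fun m : ι → ℤ => fun i => (m i : ℚ))).relIndex
        (AddSubgroup.closure (Set.range (A.map (Int.cast : ℤ → ℚ))⁻¹.row)) = A.det.natAbs := by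
  rw [closure_range_intCast_eq_closure_basisFun, ← coe_rowsInvBasis hA]
  have hle := closure_basisFun_le_closure_rowsInvBasis hA
  refine ⟨hle, ?_⟩
  have hindex := AddSubgroup.relIndex_eq_abs_det _ _ hle _ _ rfl rfl
  rw [det_rowsInvBasis_basisFun, ← Int.cast_abs, ← Int.natCast_natAbs] at hindex
  exact_mod_cast hindex

end

theorem stmt8_general (p₁ p₂ p₃ : ℕ) (hp₁ : 0 < p₁) (hp₂ : 0 < p₂) (hp₃ : 0 < p₃)
    (q₁ q₂ r₁ : ℤ)
    (L : Matrix (Fin 3) (Fin 3) ℚ)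
    (hL : L = !![(p₁ : ℚ), 0, 0; (q₁ : ℚ), (p₂ : ℚ), 0; (r₁ : ℚ), (q₂ : ℚ), (p₃ : ℚ)])
    (M : AddSubgroup (Fin 3 → ℚ))
    (hM : M = AddSubgroup.closure (Set.range fun i => fun j => L⁻¹ i j)) :
    intLattice ≤ M ∧ AddSubgroup.relIndex intLattice M = p₁ * p₂ * p₃ := by
  set A : Matrix (Fin 3) (Fin 3) ℤ := !![(p₁ : ℤ), 0, 0; q₁, p₂, 0; r₁, q₂, p₃]
  have hLA : L = A.map (Int.cast : ℤ → ℚ) := by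
    rw [hL]
    ext i j
    fin_cases i <;> fin_cases j <;> simp [A]
  have hdet : A.det = ((p₁ * p₂ * p₃ : ℕ) : ℤ) := by
    push_cast
    simp [A, Matrix.det_fin_three]
  have hA : A.det ≠ 0 := by rw [hdet]; positivity
  subst hM hLA
  rw [← Int.natAbs_natCast (p₁ * p₂ * p₃), ← hdet]
  exact closure_intCast_le_closure_rows_inv_and_relIndex hA

theorem stmt8 (p₁ p₂ p₃ : ℕ) (hp₁ : 0 < p₁) (hp₂ : 0 < p₂) (hp₃ : 0 < p₃)
    (q₁ q₂ r₁ : ℤ)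
    (hq₁ : 0 ≤ q₁ ∧ q₁ < (p₂ : ℤ)) (hq₂ : 0 ≤ q₂ ∧ q₂ < (p₃ : ℤ))
    (hr₁ : 0 ≤ r₁ ∧ r₁ < (p₃ : ℤ))
    (L : Matrix (Fin 3) (Fin 3) ℚ)
    (hL : L = !![(p₁ : ℚ), 0, 0; (q₁ : ℚ), (p₂ : ℚ), 0; (r₁ : ℚ), (q₂ : ℚ), (p₃ : ℚ)])
    (M : AddSubgroup (Fin 3 → ℚ))
    (hM : M = AddSubgroup.closure (Set.range fun i => fun j => L⁻¹ i j)) :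
    intLattice ≤ M ∧ AddSubgroup.relIndex intLattice M = p₁ * p₂ * p₃ :=
  stmt8_general p₁ p₂ p₃ hp₁ hp₂ hp₃ q₁ q₂ r₁ L hL M hM
end

section
/- Let n be a positive integer and let M be an additive subgroup of ℚ³ with ℤ³ ⊆ M and index [M : ℤ³] = n. Then there exist positive integers p₁, p₂, p₃ with n = p₁p₂p₃ and integers q₁, q₂, r₁ with 0 ≤ q₁ < p₂, 0 ≤ q₂ < p₃ and 0 ≤ r₁ < p₃, such that M is generated as an additive group by the rows of the inverse L⁻¹ of the lower triangular matrix L with rows (p₁, 0, 0), (q₁, p₂, 0), (r₁, q₂, p₃). -/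
open AddSubgroup Set

theorem mem_intLattice_iff {x : Fin 3 → ℚ} :
    x ∈ intLattice ↔ ∀ i, x i ∈ range ((↑) : ℤ → ℚ) := by
  constructor
  · intro hx i
    induction hx using closure_induction with
    | mem _ h => obtain ⟨m, rfl⟩ := h; exact ⟨m i, rfl⟩
    | zero => exact ⟨0, by simp⟩
    | add _ _ _ _ ha hb =>
      obtain ⟨a, ha⟩ := ha; obtain ⟨b, hb⟩ := hb; exact ⟨a + b, by simp [ha, hb]⟩
    | neg _ _ ha => obtain ⟨a, ha⟩ := ha; exact ⟨-a, by simp [ha]⟩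
  · intro hx
    choose m hm using hx
    exact subset_closure ⟨m, funext hm⟩

theorem intLattice_eq_closure_basisFun :
    intLattice = AddSubgroup.closure (range (Pi.basisFun ℚ (Fin 3))) := by
  ext x
  rw [mem_intLattice_iff, ← Submodule.span_int_eq_addSubgroupClosure, Submodule.mem_toAddSubgroup,
    Module.Basis.mem_span_iff_repr_mem]
  simp

theorem single_mem_intLattice (i : Fin 3) : Pi.single i (1 : ℚ) ∈ intLattice :=
  intLattice_eq_closure_basisFun ▸ subset_closure ⟨i, by simp⟩

theorem AddSubgroup.exists_eq_zmultiples_inv_of_one_mem {A : AddSubgroup ℚ} (h1 : (1 : ℚ) ∈ A)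
    {n : ℕ} (hn : 0 < n) (hden : ∀ x ∈ A, n * x ∈ range ((↑) : ℤ → ℚ)) :
    ∃ p : ℕ, 0 < p ∧ A = zmultiples (p : ℚ)⁻¹ := by
  have hdisj : Disjoint (A : Set ℚ) (Ioo 0 (n : ℚ)⁻¹) := by
    refine Set.disjoint_left.2 fun x hx ⟨hx0, hxn⟩ => ?_
    obtain ⟨k, hk⟩ := hden x hx
    have h0 : (0 : ℚ) < k := by rw [hk]; positivity
    have h1 : (k : ℚ) < 1 := by
      rw [hk]
      calc (n : ℚ) * x < n * (n : ℚ)⁻¹ := by gcongr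
        _ = 1 := mul_inv_cancel₀ (by positivity)
    norm_cast at h0 h1
    omega
  obtain ⟨b, rfl⟩ := cyclic_of_isolated_zero (by positivity) hdisj
  rw [← zmultiples_eq_closure] at h1 ⊢
  obtain ⟨k, hk⟩ := mem_zmultiples_iff.1 h1
  have hk0 : k ≠ 0 := by rintro rfl; simp at hk
  have hb : b = (k : ℚ)⁻¹ := by
    rw [zsmul_eq_mul] at hk; field_simp; linarith
  refine ⟨k.natAbs, Int.natAbs_pos.2 hk0, ?_⟩
  rcases Int.natAbs_eq k with h | h <;> rw [hb, h]
  · simp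
  · simp [zmultiples_neg]

theorem AddSubgroup.eq_zmultiples_sup_inf_ker {G H : Type*} [AddCommGroup G] [AddGroup H]
    (f : G →+ H) {M : AddSubgroup G} {w : G} (hw : w ∈ M) (hmap : M.map f ≤ zmultiples (f w)) :
    M = zmultiples w ⊔ (M ⊓ f.ker) := by
  refine le_antisymm (fun x hx => ?_) (sup_le (zmultiples_le.2 hw) inf_le_left)
  obtain ⟨k, hk⟩ := mem_zmultiples_iff.1 (hmap ⟨x, hx, rfl⟩)
  have hres : x - k • w ∈ M ⊓ f.ker := by
    refine mem_inf.2 ⟨sub_mem hx (zsmul_mem hw k), ?_⟩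
    simp [hk]
  exact mem_sup.2 ⟨k • w, zsmul_mem_zmultiples w k, _, hres, add_sub_cancel _ _⟩

theorem exists_emod_zsmul_add_nsmul_eq {G : Type*} [AddCommGroup G] {p : ℕ} (hp : 0 < p)
    (k : ℤ) (w v : G) :
    ∃ q s : ℤ, (0 ≤ q ∧ q < p) ∧ q • w + p • (v + s • w) = k • w + p • v := by
  refine ⟨k % p, k / p, ⟨Int.emod_nonneg _ (by omega), Int.emod_lt_of_pos _ (by omega)⟩, ?_⟩
  conv_rhs => rw [← Int.emod_add_mul_ediv k p]
  module

abbrev coord (i : Fin 3) : (Fin 3 → ℚ) →+ ℚ := Pi.evalAddMonoidHom (fun _ => ℚ) i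

theorem exists_map_coord_eq_zmultiples_inv {n : ℕ} (hn : 0 < n) {M N : AddSubgroup (Fin 3 → ℚ)}
    (hden : ∀ x ∈ M, n • x ∈ intLattice) (hNM : N ≤ M) {i : Fin 3} (hi : Pi.single i 1 ∈ N) :
    ∃ p : ℕ, 0 < p ∧ N.map (coord i) = zmultiples (p : ℚ)⁻¹ :=
  exists_eq_zmultiples_inv_of_one_mem ⟨_, hi, by simp⟩ hn (by
    rintro _ ⟨x, hx, rfl⟩
    simpa using mem_intLattice_iff.1 (hden x (hNM hx)) i)

theorem nsmul_sub_single_mem_inf_ker {N : AddSubgroup (Fin 3 → ℚ)} {i : Fin 3} {v : Fin 3 → ℚ}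
    (hv : v ∈ N) (hi : Pi.single i 1 ∈ N) {p : ℕ} (hp : 0 < p) (hvi : v i = (p : ℚ)⁻¹) :
    p • v - Pi.single i 1 ∈ N ⊓ (coord i).ker :=
  mem_inf.2 ⟨sub_mem (nsmul_mem hv p) hi, by simp [hvi, hp.ne']⟩

theorem exists_row_zero {n : ℕ} (hn : 0 < n) {M : AddSubgroup (Fin 3 → ℚ)}
    (hle : intLattice ≤ M) (hden : ∀ x ∈ M, n • x ∈ intLattice) :
    ∃ p₁ : ℕ, 0 < p₁ ∧ ∃ W₀ ∈ M ⊓ (coord 2).ker ⊓ (coord 1).ker,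
      p₁ • W₀ = Pi.single 0 1 ∧ M ⊓ (coord 2).ker ⊓ (coord 1).ker = zmultiples W₀ := by
  set M₁ := M ⊓ (coord 2).ker ⊓ (coord 1).ker
  have he₀ : Pi.single 0 1 ∈ M₁ := by simp [M₁, hle (single_mem_intLattice 0)]
  have hker : M₁ ⊓ (coord 0).ker = ⊥ := by
    refine eq_bot_iff.2 fun x hx => ?_
    simp only [M₁, mem_inf, AddMonoidHom.mem_ker] at hx
    obtain ⟨⟨⟨-, h₂⟩, h₁⟩, h₀⟩ := hx
    exact funext fun i => by fin_cases i <;> assumption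
  obtain ⟨p₁, hp₁, hmap⟩ :=
    exists_map_coord_eq_zmultiples_inv hn hden (inf_le_left.trans inf_le_left) he₀
  obtain ⟨W₀, hW₀, hW₀0⟩ : (p₁ : ℚ)⁻¹ ∈ M₁.map (coord 0) := hmap ▸ mem_zmultiples _
  refine ⟨p₁, hp₁, W₀, hW₀, ?_, ?_⟩
  · have := nsmul_sub_single_mem_inf_ker hW₀ he₀ hp₁ hW₀0
    rwa [hker, mem_bot, sub_eq_zero] at this
  · rw [eq_zmultiples_sup_inf_ker (coord 0) hW₀ (by rw [hmap, hW₀0]), hker, sup_bot_eq]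

theorem exists_row_one {n : ℕ} (hn : 0 < n) {M : AddSubgroup (Fin 3 → ℚ)}
    (hle : intLattice ≤ M) (hden : ∀ x ∈ M, n • x ∈ intLattice) {W₀ : Fin 3 → ℚ}
    (hW₀ : W₀ ∈ M ⊓ (coord 2).ker ⊓ (coord 1).ker)
    (hM₁ : M ⊓ (coord 2).ker ⊓ (coord 1).ker = zmultiples W₀) :
    ∃ p₂ : ℕ, 0 < p₂ ∧ ∃ q₁ : ℤ, (0 ≤ q₁ ∧ q₁ < p₂) ∧ ∃ W₁ ∈ M ⊓ (coord 2).ker,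
      q₁ • W₀ + p₂ • W₁ = Pi.single 1 1 ∧
      M ⊓ (coord 2).ker ≤ AddSubgroup.closure {W₀, W₁} := by
  set M₂ := M ⊓ (coord 2).ker
  have he₁ : Pi.single 1 1 ∈ M₂ := by simp [M₂, hle (single_mem_intLattice 1)]
  obtain ⟨p₂, hp₂, hmap⟩ := exists_map_coord_eq_zmultiples_inv hn hden inf_le_left he₁
  obtain ⟨v, hv, hv1⟩ : (p₂ : ℚ)⁻¹ ∈ M₂.map (coord 1) := hmap ▸ mem_zmultiples _
  obtain ⟨k, hk⟩ : p₂ • v - Pi.single 1 1 ∈ zmultiples W₀ :=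
    hM₁ ▸ nsmul_sub_single_mem_inf_ker hv he₁ hp₂ hv1
  obtain ⟨q₁, s, hq₁, hred⟩ := exists_emod_zsmul_add_nsmul_eq hp₂ (-k) W₀ v
  have hW₀M₂ : W₀ ∈ M₂ := (mem_inf.1 hW₀).1
  have hW₁ : v + s • W₀ ∈ M₂ := add_mem hv (zsmul_mem hW₀M₂ s)
  have hW₁1 : coord 1 (v + s • W₀) = (p₂ : ℚ)⁻¹ := by
    have hW₀1 : W₀ 1 = 0 := (mem_inf.1 hW₀).2
    simp [← hv1, hW₀1]
  refine ⟨p₂, hp₂, q₁, hq₁, v + s • W₀, hW₁, by linear_combination (norm := module) hred - hk, ?_⟩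
  rw [eq_zmultiples_sup_inf_ker (coord 1) hW₁ (by rw [hmap, hW₁1])]
  refine sup_le (zmultiples_le.2 (subset_closure (by simp))) ?_
  rw [hM₁]
  exact zmultiples_le.2 (subset_closure (by simp))

theorem exists_row_two {n : ℕ} (hn : 0 < n) {M : AddSubgroup (Fin 3 → ℚ)}
    (hle : intLattice ≤ M) (hden : ∀ x ∈ M, n • x ∈ intLattice) {W₀ W₁ : Fin 3 → ℚ}
    (hW₀ : W₀ ∈ M ⊓ (coord 2).ker) (hW₁ : W₁ ∈ M ⊓ (coord 2).ker)
    (hM₂ : M ⊓ (coord 2).ker ≤ AddSubgroup.closure {W₀, W₁}) :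
    ∃ p₃ : ℕ, 0 < p₃ ∧ ∃ q₂ r₁ : ℤ, (0 ≤ q₂ ∧ q₂ < p₃) ∧ (0 ≤ r₁ ∧ r₁ < p₃) ∧ ∃ W₂ ∈ M,
      r₁ • W₀ + q₂ • W₁ + p₃ • W₂ = Pi.single 2 1 ∧
      M ≤ AddSubgroup.closure {W₀, W₁, W₂} := by
  have he₂ : Pi.single 2 1 ∈ M := hle (single_mem_intLattice 2)
  obtain ⟨p₃, hp₃, hmap⟩ := exists_map_coord_eq_zmultiples_inv hn hden le_rfl he₂
  obtain ⟨v, hv, hv2⟩ : (p₃ : ℚ)⁻¹ ∈ M.map (coord 2) := hmap ▸ mem_zmultiples _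
  obtain ⟨a, b, hab⟩ :=
    mem_closure_pair.1 (hM₂ (nsmul_sub_single_mem_inf_ker hv he₂ hp₃ hv2))
  obtain ⟨q₂, s₁, hq₂, hred₁⟩ := exists_emod_zsmul_add_nsmul_eq hp₃ (-b) W₁ v
  obtain ⟨r₁, s₀, hr₁, hred₀⟩ := exists_emod_zsmul_add_nsmul_eq hp₃ (-a) W₀ (v + s₁ • W₁)
  set W₂ := v + s₁ • W₁ + s₀ • W₀
  have hW₂ : W₂ ∈ M := add_mem (add_mem hv (zsmul_mem (mem_inf.1 hW₁).1 s₁))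
    (zsmul_mem (mem_inf.1 hW₀).1 s₀)
  have hW₂2 : coord 2 W₂ = (p₃ : ℚ)⁻¹ := by
    have hW₀2 : W₀ 2 = 0 := (mem_inf.1 hW₀).2
    have hW₁2 : W₁ 2 = 0 := (mem_inf.1 hW₁).2
    simp [W₂, ← hv2, hW₀2, hW₁2]
  refine ⟨p₃, hp₃, q₂, r₁, hq₂, hr₁, W₂, hW₂,
    by linear_combination (norm := module) hred₀ + hred₁ - hab, ?_⟩
  rw [eq_zmultiples_sup_inf_ker (coord 2) hW₂ (by rw [hmap, hW₂2])]
  refine sup_le (zmultiples_le.2 (subset_closure (by simp))) ?_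
  exact hM₂.trans (closure_mono (by simp [Set.insert_subset_iff]))

theorem inv_lowerTriangular_eq {p₁ p₂ p₃ : ℕ} {q₁ q₂ r₁ : ℤ} {W₀ W₁ W₂ : Fin 3 → ℚ}
    (h₀ : p₁ • W₀ = Pi.single 0 1) (h₁ : q₁ • W₀ + p₂ • W₁ = Pi.single 1 1)
    (h₂ : r₁ • W₀ + q₂ • W₁ + p₃ • W₂ = Pi.single 2 1) :
    (!![(p₁ : ℚ), 0, 0; (q₁ : ℚ), (p₂ : ℚ), 0; (r₁ : ℚ), (q₂ : ℚ), (p₃ : ℚ)])⁻¹ =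
      Matrix.of ![W₀, W₁, W₂] := by
  refine Matrix.inv_eq_right_inv ?_
  ext i j
  rw [Matrix.one_eq_pi_single]
  fin_cases i
  · simpa [Matrix.mul_apply, Fin.sum_univ_three] using congrFun h₀ j
  · simpa [Matrix.mul_apply, Fin.sum_univ_three] using congrFun h₁ j
  · simpa [Matrix.mul_apply, Fin.sum_univ_three] using congrFun h₂ j

-- `L⁻¹.row`, not `L⁻¹`: where a function `Fin 3 → Fin 3 → ℚ` is expected, `L⁻¹` elaborates as the
-- pointwise inverse.
theorem relIndex_intLattice_closure_rows_inv {L : Matrix (Fin 3) (Fin 3) ℚ} (hL : L.det ≠ 0)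
    (hle : intLattice ≤ AddSubgroup.closure (range L⁻¹.row)) :
    (intLattice.relIndex (AddSubgroup.closure (range L⁻¹.row)) : ℚ) = |L.det| := by
  have hinv : IsUnit L⁻¹ :=
    (Matrix.isUnit_iff_isUnit_det _).2 (Matrix.isUnit_nonsing_inv_det_iff.2 hL.isUnit)
  have hli : LinearIndependent ℚ L⁻¹.row := Matrix.linearIndependent_rows_of_isUnit hinv
  have hcard : Fintype.card (Fin 3) = Module.finrank ℚ (Fin 3 → ℚ) := by simp
  let b := basisOfLinearIndependentOfCardEqFinrank hli hcard
  have hb : ⇑b = L⁻¹.row := coe_basisOfLinearIndependentOfCardEqFinrank _ _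
  rw [relIndex_eq_abs_det _ _ hle (Pi.basisFun ℚ (Fin 3)) b intLattice_eq_closure_basisFun
    (by rw [hb])]
  have hprod : b.det (Pi.basisFun ℚ (Fin 3)) * (Pi.basisFun ℚ (Fin 3)).det b = 1 := by
    rw [Module.Basis.det_mul_det, Module.Basis.det_self]
  have hdet : (Matrix.of L⁻¹.row).det = L.det⁻¹ := by
    change L⁻¹.det = _
    rw [Matrix.det_nonsing_inv, Ring.inverse_eq_inv']
  rw [Pi.basisFun_det_apply, hb, hdet, mul_inv_eq_one₀ hL] at hprod
  rw [hprod]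

theorem stmt9 (n : ℕ) (hn : 0 < n) (M : AddSubgroup (Fin 3 → ℚ))
    (hle : intLattice ≤ M) (hidx : AddSubgroup.relIndex intLattice M = n) :
    ∃ p₁ p₂ p₃ : ℕ, 0 < p₁ ∧ 0 < p₂ ∧ 0 < p₃ ∧ n = p₁ * p₂ * p₃ ∧
      ∃ q₁ q₂ r₁ : ℤ,
        (0 ≤ q₁ ∧ q₁ < (p₂ : ℤ)) ∧ (0 ≤ q₂ ∧ q₂ < (p₃ : ℤ)) ∧ (0 ≤ r₁ ∧ r₁ < (p₃ : ℤ)) ∧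
        M = AddSubgroup.closure (Set.range fun i => fun j =>
          (!![(p₁ : ℚ), 0, 0; (q₁ : ℚ), (p₂ : ℚ), 0; (r₁ : ℚ), (q₂ : ℚ), (p₃ : ℚ)])⁻¹ i j) := by
  have hden : ∀ x ∈ M, n • x ∈ intLattice := fun x hx => hidx ▸ intLattice.nsmul_relIndex_mem hx
  obtain ⟨p₁, hp₁, W₀, hW₀, h₀, hM₁⟩ := exists_row_zero hn hle hden
  obtain ⟨p₂, hp₂, q₁, hq₁, W₁, hW₁, h₁, hM₂⟩ := exists_row_one hn hle hden hW₀ hM₁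
  obtain ⟨p₃, hp₃, q₂, r₁, hq₂, hr₁, W₂, hW₂, h₂, hM⟩ :=
    exists_row_two hn hle hden (mem_inf.1 hW₀).1 hW₁ hM₂
  set L : Matrix (Fin 3) (Fin 3) ℚ :=
    !![(p₁ : ℚ), 0, 0; (q₁ : ℚ), (p₂ : ℚ), 0; (r₁ : ℚ), (q₂ : ℚ), (p₃ : ℚ)]
  have hMeq : M = AddSubgroup.closure (range L⁻¹.row) := by
    rw [inv_lowerTriangular_eq h₀ h₁ h₂]
    change M = AddSubgroup.closure (range ![W₀, W₁, W₂])
    simp only [Matrix.range_cons, Matrix.range_empty, Set.union_empty, Set.singleton_union]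
    refine le_antisymm hM ((closure_le _).2 ?_)
    simp [Set.insert_subset_iff, hW₂, (mem_inf.1 hW₁).1,
      (mem_inf.1 (mem_inf.1 hW₀).1).1]
  have hdet : L.det = p₁ * p₂ * p₃ := by simp [Matrix.det_fin_three, L]
  have hindex := relIndex_intLattice_closure_rows_inv (by rw [hdet]; positivity) (hMeq ▸ hle)
  rw [← hMeq, hidx, hdet, abs_of_pos (by positivity)] at hindex
  exact ⟨p₁, p₂, p₃, hp₁, hp₂, hp₃, by exact_mod_cast hindex, q₁, q₂, r₁, hq₁, hq₂, hr₁, hMeq⟩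
end

section
/- Let n ≥ 1 and let g = (a, b, c) ∈ (ℤ/nℤ)³ be a nonzero element such that the additive orders of a, b and c are not all equal. Then no pattern A in (ℤ/nℤ)³ is fixed by translation by g, i.e. there is no pattern A with { x + g : x ∈ A } = A. -/
/-- A pattern in the discrete torus `(ℤ/nℤ)³` is a set of `n` points any two distinct
members of which differ in all three coordinates. -/
def IsPattern (n : ℕ) (A : Finset (Fin 3 → ZMod n)) : Prop :=
  A.card = n ∧ ∀ x ∈ A, ∀ y ∈ A, x ≠ y → ∀ i, x i ≠ y i

/-! If `A + g = A`, then `A` contains `x + k • g` for every `x ∈ A`. Taking `k` to be the order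
of the coordinate `g i`, the points `x` and `x + k • g` agree in coordinate `i`, so in a pattern
they coincide and `k • g = 0`. Hence the order of every coordinate of `g` divides the order of
every other one, and all three orders are equal. -/

theorem Finset.add_nsmul_mem_of_image_add_eq {G : Type*} [AddMonoid G] [DecidableEq G]
    {A : Finset G} {g : G} (hA : A.image (· + g) = A) {x : G} (hx : x ∈ A) (k : ℕ) :
    x + k • g ∈ A := by
  induction k with
  | zero => simpa using hx
  | succ k ih =>
    rw [succ_nsmul, ← add_assoc, ← hA]
    exact mem_image_of_mem _ ih

section CoordinatewiseSeparated

variable {ι G : Type*} [AddGroup G] [DecidableEq (ι → G)] {A : Finset (ι → G)} {g : ι → G}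

theorem addOrderOf_apply_nsmul_eq_zero_of_image_add_eq (hA : A.image (· + g) = A)
    (hsep : ∀ x ∈ A, ∀ y ∈ A, x ≠ y → ∀ i, x i ≠ y i) (hne : A.Nonempty) (i : ι) :
    addOrderOf (g i) • g = 0 := by
  obtain ⟨x, hx⟩ := hne
  have hagree : (x + addOrderOf (g i) • g) i = x i := by
    simp [addOrderOf_nsmul_eq_zero]
  have hfixed : x + addOrderOf (g i) • g = x := by
    by_contra hne
    exact hsep _ (A.add_nsmul_mem_of_image_add_eq hA hx _) x hx hne i hagree
  simpa using hfixed

theorem addOrderOf_apply_eq_of_image_add_eq (hA : A.image (· + g) = A)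
    (hsep : ∀ x ∈ A, ∀ y ∈ A, x ≠ y → ∀ i, x i ≠ y i) (hne : A.Nonempty) (i j : ι) :
    addOrderOf (g i) = addOrderOf (g j) := by
  have hdvd (i j : ι) : addOrderOf (g j) ∣ addOrderOf (g i) :=
    addOrderOf_dvd_of_nsmul_eq_zero <| by
      simpa using congrFun (addOrderOf_apply_nsmul_eq_zero_of_image_add_eq hA hsep hne i) j
  exact Nat.dvd_antisymm (hdvd j i) (hdvd i j)

end CoordinatewiseSeparated

theorem stmt11_general (n : ℕ) (hn : 1 ≤ n) (g : Fin 3 → ZMod n)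
    (hord : ¬ (addOrderOf (g 0) = addOrderOf (g 1) ∧ addOrderOf (g 1) = addOrderOf (g 2))) :
    ∀ A : Finset (Fin 3 → ZMod n), IsPattern n A → A.image (fun x => x + g) ≠ A := by
  rintro A ⟨hcard, hsep⟩ hA
  have hne : A.Nonempty := Finset.card_pos.mp (by omega)
  exact hord ⟨addOrderOf_apply_eq_of_image_add_eq hA hsep hne 0 1,
    addOrderOf_apply_eq_of_image_add_eq hA hsep hne 1 2⟩

theorem stmt11 (n : ℕ) (hn : 1 ≤ n) (g : Fin 3 → ZMod n) (hg : g ≠ 0)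
    (hord : ¬ (addOrderOf (g 0) = addOrderOf (g 1) ∧ addOrderOf (g 1) = addOrderOf (g 2))) :
    ∀ A : Finset (Fin 3 → ZMod n), IsPattern n A → A.image (fun x => x + g) ≠ A :=
  stmt11_general n hn g hord
end

section
/- Let n ≥ 1 and let g = (a, b, c) ∈ (ℤ/nℤ)³ be an element such that a, b and c all have the same additive order r. Then the number of patterns A in (ℤ/nℤ)³ fixed by translation by g (i.e. with { x + g : x ∈ A } = A) equals the square of the product n·(n−r)·(n−2r)⋯r, that is, (∏_{j=0}^{n/r − 1} (n − j·r))². -/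
open Equiv Finset Nat

theorem IsConj.ncard_setOf_semiconjBy {M : Type*} [Group M] {x y : M} (h : IsConj x y) :
    {f : M | SemiconjBy f x y}.ncard = Nat.card (Subgroup.centralizer {x}) := by
  obtain ⟨c, rfl⟩ := isConj_iff.mp h
  rw [← Nat.card_coe_set_eq]
  refine Nat.card_congr ((Equiv.mulLeft c⁻¹).subtypeEquiv fun f => ?_)
  rw [Set.mem_ofPred_eq, Subgroup.mem_centralizer_singleton_iff, SemiconjBy, Equiv.coe_mulLeft,
    ← mul_right_inj c⁻¹]
  simp only [mul_assoc, inv_mul_cancel_left]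

namespace Equiv.Perm

variable {G : Type*} [AddGroup G] [Fintype G] [DecidableEq G]

theorem eq_addOrderOf_of_mem_cycleType_addRight {a : G} {c : ℕ}
    (hc : c ∈ (Equiv.addRight a).cycleType) : c = addOrderOf a := by
  apply Nat.dvd_antisymm
  · refine (dvd_of_mem_cycleType hc).trans (orderOf_dvd_of_pow_eq_one ?_)
    rw [nsmul_addRight, addOrderOf_nsmul_eq_zero, addRight_zero]
  · rw [cycleType_def, Multiset.mem_map] at hc
    obtain ⟨p, hp, rfl⟩ := hc
    have hpc := (mem_cycleFactorsFinset_iff.mp hp).1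
    obtain ⟨x, hx⟩ := hpc.nonempty_support
    have hpx : p = (Equiv.addRight a).cycleOf x := cycle_is_cycleOf hx hp
    apply addOrderOf_dvd_of_nsmul_eq_zero
    have h := congr_arg (· x) (pow_orderOf_eq_one p)
    simp only [hpc.orderOf] at h
    rw [hpx, cycleOf_pow_apply_self, ← hpx, nsmul_addRight] at h
    simpa using h

theorem cycleType_addRight_of_ne_zero {a : G} (ha : a ≠ 0) :
    (Equiv.addRight a).cycleType =
      Multiset.replicate (Fintype.card G / addOrderOf a) (addOrderOf a) := by
  have hrep : (Equiv.addRight a).cycleType =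
      Multiset.replicate (Multiset.card (Equiv.addRight a).cycleType) (addOrderOf a) :=
    Multiset.eq_replicate_card.mpr fun _ => eq_addOrderOf_of_mem_cycleType_addRight
  have hsupp : (Equiv.addRight a).support = univ := by
    ext x; simpa using ha
  have hsum := sum_cycleType (Equiv.addRight a)
  rw [hsupp, Finset.card_univ, hrep, Multiset.sum_replicate, smul_eq_mul] at hsum
  rw [hrep, ← hsum, Nat.mul_div_cancel _ (addOrderOf_pos a)]

theorem isConj_addRight {a b : G} (h : addOrderOf a = addOrderOf b) :
    IsConj (Equiv.addRight a) (Equiv.addRight b) := by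
  rw [isConj_iff_cycleType_eq]
  by_cases ha : a = 0
  · have hb : b = 0 := by
      rwa [ha, addOrderOf_zero, eq_comm, AddMonoid.addOrderOf_eq_one_iff] at h
    simp [ha, hb]
  · have hb : b ≠ 0 := by rintro rfl; simp_all
    rw [cycleType_addRight_of_ne_zero ha, cycleType_addRight_of_ne_zero hb, h]

theorem nat_card_centralizer_addRight (a : G) :
    Nat.card (Subgroup.centralizer {Equiv.addRight a}) =
      (Fintype.card G / addOrderOf a)! * addOrderOf a ^ (Fintype.card G / addOrderOf a) := by
  rw [nat_card_centralizer]
  by_cases ha : a = 0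
  · simp [ha]
  · rw [cycleType_addRight_of_ne_zero ha]
    have hsum : (Multiset.replicate (Fintype.card G / addOrderOf a) (addOrderOf a)).sum =
        Fintype.card G := by
      rw [Multiset.sum_replicate, smul_eq_mul, Nat.div_mul_cancel addOrderOf_dvd_card]
    rw [hsum, Nat.sub_self, factorial_zero, one_mul, Multiset.prod_replicate,
      Multiset.toFinset_replicate]
    split_ifs with h0 <;> simp [h0, mul_comm]

end Equiv.Perm

theorem prod_range_sub_mul_eq_factorial_mul_pow {n r : ℕ} (h : r ∣ n) :
    ∏ j ∈ range (n / r), (n - j * r) = (n / r)! * r ^ (n / r) := by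
  rcases r.eq_zero_or_pos with rfl | hr
  · simp
  obtain ⟨m, rfl⟩ := h
  rw [Nat.mul_div_cancel_left m hr]
  calc ∏ j ∈ range m, (r * m - j * r) = ∏ j ∈ range m, (m - j) * r :=
        prod_congr rfl fun j _ => by rw [Nat.sub_mul, mul_comm]
    _ = m ! * r ^ m := by
        rw [prod_mul_distrib, prod_const, card_range, ← descFactorial_eq_prod_range,
          descFactorial_self]

theorem isPattern_zero_iff {A : Finset (Fin 3 → ZMod 0)} : IsPattern 0 A ↔ A = ∅ := by
  simp +contextual [IsPattern]

section Patterns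

variable {n : ℕ} [NeZero n]

def patternOfPerms (σ τ : Perm (ZMod n)) : Finset (Fin 3 → ZMod n) :=
  univ.filter fun x => x 1 = σ (x 0) ∧ x 2 = τ (x 0)

variable {σ τ : Perm (ZMod n)}

theorem mem_patternOfPerms {x : Fin 3 → ZMod n} :
    x ∈ patternOfPerms σ τ ↔ x 1 = σ (x 0) ∧ x 2 = τ (x 0) := by
  simp [patternOfPerms]

theorem eq_of_mem_patternOfPerms {x y : Fin 3 → ZMod n} (hx : x ∈ patternOfPerms σ τ)
    (hy : y ∈ patternOfPerms σ τ) (h : x 0 = y 0) : x = y := by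
  rw [mem_patternOfPerms] at hx hy
  ext i; fin_cases i
  · exact h
  · simp [hx.1, hy.1, h]
  · simp [hx.2, hy.2, h]

theorem card_patternOfPerms : (patternOfPerms σ τ).card = n := by
  calc (patternOfPerms σ τ).card = (univ : Finset (ZMod n)).card :=
        card_nbij' (fun x => x 0) (fun u => ![u, σ u, τ u]) (by simp)
          (by simp [mem_patternOfPerms])
          (fun x hx => eq_of_mem_patternOfPerms (by simp [mem_patternOfPerms]) hx rfl)
          (fun u _ => by simp)
    _ = n := by simp

theorem isPattern_patternOfPerms : IsPattern n (patternOfPerms σ τ) := by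
  refine ⟨card_patternOfPerms, fun x hx y hy hxy i => ?_⟩
  have h0 : x 0 ≠ y 0 := fun h => hxy (eq_of_mem_patternOfPerms hx hy h)
  rw [mem_patternOfPerms] at hx hy
  fin_cases i
  · exact h0
  · simpa [hx.1, hy.1] using h0
  · simpa [hx.2, hy.2] using h0

theorem patternOfPerms_injective2 : Function.Injective2 (patternOfPerms (n := n)) := by
  intro σ σ' τ τ' h
  have hmem u : ![u, σ u, τ u] ∈ patternOfPerms σ' τ' := h ▸ by simp [mem_patternOfPerms]
  simp only [mem_patternOfPerms] at hmem
  exact ⟨Equiv.ext fun u => by simpa using (hmem u).1,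
    Equiv.ext fun u => by simpa using (hmem u).2⟩

theorem IsPattern.bijective_eval {A : Finset (Fin 3 → ZMod n)} (hA : IsPattern n A) (i : Fin 3) :
    Function.Bijective fun x : A => x.1 i := by
  rw [Fintype.bijective_iff_injective_and_card, Fintype.card_coe, ZMod.card]
  refine ⟨fun x y hxy => ?_, hA.1⟩
  by_contra hne
  exact hA.2 x x.2 y y.2 (Subtype.coe_ne_coe.mpr hne) i hxy

theorem IsPattern.exists_patternOfPerms_eq {A : Finset (Fin 3 → ZMod n)} (hA : IsPattern n A) :
    ∃ σ τ : Perm (ZMod n), patternOfPerms σ τ = A := by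
  set e := fun i => Equiv.ofBijective _ (hA.bijective_eval i)
  refine ⟨(e 0).symm.trans (e 1), (e 0).symm.trans (e 2), ?_⟩
  ext x
  rw [mem_patternOfPerms]
  constructor
  · rintro ⟨h1, h2⟩
    have hp0 : ((e 0).symm (x 0)).1 0 = x 0 := (e 0).apply_symm_apply (x 0)
    have hp : ((e 0).symm (x 0)).1 = x := by
      ext i; fin_cases i
      exacts [hp0, h1.symm, h2.symm]
    exact hp ▸ ((e 0).symm (x 0)).2
  · intro hx
    have : (e 0).symm (x 0) = ⟨x, hx⟩ := (e 0).symm_apply_eq.mpr rfl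
    simp [this, e]

theorem image_add_patternOfPerms (g : Fin 3 → ZMod n) :
    (patternOfPerms σ τ).image (· + g) =
      patternOfPerms (Equiv.addRight (g 1) * σ * (Equiv.addRight (g 0))⁻¹)
        (Equiv.addRight (g 2) * τ * (Equiv.addRight (g 0))⁻¹) := by
  ext x
  rw [Finset.image_add_right]
  simp [mem_patternOfPerms, ← sub_eq_add_neg, sub_eq_iff_eq_add]

theorem image_add_patternOfPerms_eq_self_iff (g : Fin 3 → ZMod n) :
    (patternOfPerms σ τ).image (· + g) = patternOfPerms σ τ ↔
      SemiconjBy σ (Equiv.addRight (g 0)) (Equiv.addRight (g 1)) ∧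
        SemiconjBy τ (Equiv.addRight (g 0)) (Equiv.addRight (g 2)) := by
  have key (ρ : Perm (ZMod n)) (i : Fin 3) :
      Equiv.addRight (g i) * ρ * (Equiv.addRight (g 0))⁻¹ = ρ ↔
        SemiconjBy ρ (Equiv.addRight (g 0)) (Equiv.addRight (g i)) := by
    rw [mul_inv_eq_iff_eq_mul, SemiconjBy, eq_comm]
  rw [image_add_patternOfPerms, patternOfPerms_injective2.eq_iff, key, key]

theorem setOf_isPattern_image_add_eq_self (g : Fin 3 → ZMod n) :
    {A : Finset (Fin 3 → ZMod n) | IsPattern n A ∧ A.image (· + g) = A} =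
      Function.uncurry patternOfPerms ''
        ({σ | SemiconjBy σ (Equiv.addRight (g 0)) (Equiv.addRight (g 1))} ×ˢ
          {τ | SemiconjBy τ (Equiv.addRight (g 0)) (Equiv.addRight (g 2))}) := by
  ext A
  constructor
  · rintro ⟨hA, hfix⟩
    obtain ⟨σ, τ, rfl⟩ := hA.exists_patternOfPerms_eq
    exact ⟨(σ, τ), (image_add_patternOfPerms_eq_self_iff g).mp hfix, rfl⟩
  · rintro ⟨⟨σ, τ⟩, hst, rfl⟩
    exact ⟨isPattern_patternOfPerms, (image_add_patternOfPerms_eq_self_iff g).mpr hst⟩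

end Patterns

theorem stmt12_general (n : ℕ) (g : Fin 3 → ZMod n) (r : ℕ)
    (h0 : addOrderOf (g 0) = r) (h1 : addOrderOf (g 1) = r) (h2 : addOrderOf (g 2) = r) :
    Set.ncard {A : Finset (Fin 3 → ZMod n) | IsPattern n A ∧ A.image (fun x => x + g) = A} =
      (∏ j ∈ Finset.range (n / r), (n - j * r)) ^ 2 := by
  rcases n.eq_zero_or_pos with rfl | hn
  · have hempty :
        {A : Finset (Fin 3 → ZMod 0) | IsPattern 0 A ∧ A.image (· + g) = A} = {∅} := by
      ext A
      simp +contextual [isPattern_zero_iff]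
    rw [hempty, Set.ncard_singleton]
    simp
  have : NeZero n := ⟨hn.ne'⟩
  have hcount (i : Fin 3) (hi : addOrderOf (g i) = r) :
      {σ : Perm (ZMod n) | SemiconjBy σ (Equiv.addRight (g 0)) (Equiv.addRight (g i))}.ncard =
        (n / r)! * r ^ (n / r) := by
    rw [(Perm.isConj_addRight (h0.trans hi.symm)).ncard_setOf_semiconjBy,
      Perm.nat_card_centralizer_addRight, ZMod.card, h0]
  have hdvd : r ∣ n := by simpa [h0] using addOrderOf_dvd_card (x := g 0)
  rw [setOf_isPattern_image_add_eq_self,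
    Set.ncard_image_of_injective _ patternOfPerms_injective2.uncurry, Set.ncard_prod,
    hcount 1 h1, hcount 2 h2, prod_range_sub_mul_eq_factorial_mul_pow hdvd, sq]

theorem stmt12 (n : ℕ) (hn : 1 ≤ n) (g : Fin 3 → ZMod n) (r : ℕ)
    (h0 : addOrderOf (g 0) = r) (h1 : addOrderOf (g 1) = r) (h2 : addOrderOf (g 2) = r) :
    Set.ncard {A : Finset (Fin 3 → ZMod n) | IsPattern n A ∧ A.image (fun x => x + g) = A} =
      (∏ j ∈ Finset.range (n / r), (n - j * r)) ^ 2 :=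
  stmt12_general n g r h0 h1 h2
end

section
/- The number of orbits of the translation action of the group (ℤ/4ℤ)³ on the set X(4) of patterns is 12. -/
/-- The orbit of a pattern under the translation action of `(ℤ/nℤ)³`. -/
def orbitOf (n : ℕ) (A : Finset (Fin 3 → ZMod n)) : Set (Finset (Fin 3 → ZMod n)) :=
  { B | ∃ g : Fin 3 → ZMod n, B = A.image (fun x => x + g) }

/-- The set of orbits of the translation action of `(ℤ/nℤ)³` on the set of patterns. -/
def orbitsOfPatterns (n : ℕ) : Set (Set (Finset (Fin 3 → ZMod n))) :=
  { O | ∃ A : Finset (Fin 3 → ZMod n), IsPattern n A ∧ O = orbitOf n A }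

open Finset

section Translation

variable {n : ℕ}

local notation "Pt" => Fin 3 → ZMod n

lemma image_add_image_add (A : Finset Pt) (g h : Pt) :
    (A.image (· + g)).image (· + h) = A.image (· + (g + h)) := by
  simp only [image_image, Function.comp_def, add_assoc]

lemma mem_orbitOf_self (A : Finset Pt) : A ∈ orbitOf n A :=
  ⟨0, by simp⟩

lemma orbitOf_image_add (A : Finset Pt) (g : Pt) :
    orbitOf n (A.image (· + g)) = orbitOf n A := by
  ext B
  constructor
  · rintro ⟨h, rfl⟩
    exact ⟨g + h, image_add_image_add A g h⟩
  · rintro ⟨h, rfl⟩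
    refine ⟨h - g, ?_⟩
    rw [image_add_image_add, add_sub_cancel]

lemma IsPattern.image_add {A : Finset Pt} (hA : IsPattern n A) (g : Pt) :
    IsPattern n (A.image (· + g)) := by
  refine ⟨by rw [card_image_of_injective _ (add_left_injective g), hA.1], ?_⟩
  simp only [mem_image]
  rintro _ ⟨x, hx, rfl⟩ _ ⟨y, hy, rfl⟩ hxy i
  have hxy' : x ≠ y := by rintro rfl; exact hxy rfl
  simpa using hA.2 x hx y hy hxy' i

lemma IsPattern.exists_zero_mem_orbitOf_eq {A : Finset Pt} (hA : IsPattern n A) (hn : 0 < n) :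
    ∃ B, IsPattern n B ∧ 0 ∈ B ∧ orbitOf n B = orbitOf n A := by
  obtain ⟨x, hx⟩ := card_pos.mp (hA.1 ▸ hn)
  exact ⟨_, hA.image_add (-x), mem_image.mpr ⟨x, hx, add_neg_cancel x⟩, orbitOf_image_add A (-x)⟩

end Translation

section Four

local notation "Pt" => Fin 3 → ZMod 4

def patternReps : Fin 12 → Finset Pt
  | 0 => {![0, 0, 0], ![1, 1, 1], ![2, 2, 2], ![3, 3, 3]}
  | 1 => {![0, 0, 0], ![1, 1, 1], ![2, 2, 3], ![3, 3, 2]}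
  | 2 => {![0, 0, 0], ![1, 1, 1], ![2, 3, 2], ![3, 2, 3]}
  | 3 => {![0, 0, 0], ![1, 1, 1], ![2, 3, 3], ![3, 2, 2]}
  | 4 => {![0, 0, 0], ![1, 1, 2], ![2, 3, 1], ![3, 2, 3]}
  | 5 => {![0, 0, 0], ![1, 1, 2], ![2, 3, 3], ![3, 2, 1]}
  | 6 => {![0, 0, 0], ![1, 1, 3], ![2, 2, 2], ![3, 3, 1]}
  | 7 => {![0, 0, 0], ![1, 1, 3], ![2, 3, 1], ![3, 2, 2]}
  | 8 => {![0, 0, 0], ![1, 1, 3], ![2, 3, 2], ![3, 2, 1]}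
  | 9 => {![0, 0, 0], ![1, 3, 1], ![2, 2, 2], ![3, 1, 3]}
  | 10 => {![0, 0, 0], ![1, 3, 1], ![2, 2, 3], ![3, 1, 2]}
  | 11 => {![0, 0, 0], ![1, 3, 3], ![2, 2, 2], ![3, 1, 1]}

set_option maxRecDepth 10000 in
lemma isPattern_patternReps : ∀ k, IsPattern 4 (patternReps k) := by
  unfold IsPattern
  decide

lemma zero_mem_patternReps : ∀ k, (0 : Pt) ∈ patternReps k := by
  decide

/- A translation `g` carrying `patternReps i` onto a set containing `0` moves a point of
`patternReps i` to `0`, so `-g ∈ patternReps i`: only four translations need to be checked. -/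
lemma patternReps_ne_image_add : ∀ i j : Fin 12, i ≠ j → ∀ g ∈ (patternReps i).image (-·),
    patternReps j ≠ (patternReps i).image (· + g) := by
  decide

-- Restricting `g` to the finite set `-patternReps k` makes the statement decidable.
set_option maxHeartbeats 10000000 in
set_option maxRecDepth 100000 in
set_option synthInstance.maxSize 2000 in
lemma exists_patternReps_image_add_eq_insert_zero :
    ∀ a : Pt, (∀ i, a i ≠ 0) → ∀ b : Pt, (∀ i, b i ≠ 0 ∧ b i ≠ a i) →
    ∀ c : Pt, (∀ i, c i ≠ 0 ∧ c i ≠ a i ∧ c i ≠ b i) →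
    ∃ k, ∃ g ∈ (patternReps k).image (-·), {0, a, b, c} = (patternReps k).image (· + g) := by
  decide

lemma IsPattern.exists_eq_patternReps_image_add {A : Finset Pt} (hA : IsPattern 4 A)
    (h0 : 0 ∈ A) : ∃ k g, A = (patternReps k).image (· + g) := by
  obtain ⟨a, b, c, hab, hac, hbc, hE⟩ :=
    card_eq_three.mp (by rw [card_erase_of_mem h0, hA.1] : (A.erase 0).card = 3)
  have hmem : ∀ x ∈ ({a, b, c} : Finset Pt), x ≠ 0 ∧ x ∈ A := fun x hx => mem_erase.mp (hE ▸ hx)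
  obtain ⟨ha0, ha⟩ := hmem a (by simp)
  obtain ⟨hb0, hb⟩ := hmem b (by simp)
  obtain ⟨hc0, hc⟩ := hmem c (by simp)
  have sep := hA.2
  obtain ⟨k, g, -, hk⟩ := exists_patternReps_image_add_eq_insert_zero
    a (fun i => sep a ha 0 h0 ha0 i)
    b (fun i => ⟨sep b hb 0 h0 hb0 i, sep b hb a ha hab.symm i⟩)
    c (fun i => ⟨sep c hc 0 h0 hc0 i, sep c hc a ha hac.symm i, sep c hc b hb hbc.symm i⟩)
  exact ⟨k, g, by rw [← insert_erase h0, hE, hk]⟩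

lemma orbitOf_patternReps_injective : Function.Injective fun k => orbitOf 4 (patternReps k) := by
  intro i j (hij : orbitOf 4 _ = orbitOf 4 _)
  by_contra hne
  obtain ⟨g, hg⟩ : patternReps j ∈ orbitOf 4 (patternReps i) := hij ▸ mem_orbitOf_self _
  obtain ⟨y, hy, hy0⟩ := mem_image.mp (hg ▸ zero_mem_patternReps j)
  exact patternReps_ne_image_add i j hne g
    (mem_image.mpr ⟨y, hy, neg_eq_of_add_eq_zero_right hy0⟩) hg

lemma orbitsOfPatterns_four_eq_range :
    orbitsOfPatterns 4 = Set.range fun k => orbitOf 4 (patternReps k) := by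
  ext O
  constructor
  · rintro ⟨A, hA, rfl⟩
    obtain ⟨B, hB, h0, hBA⟩ := hA.exists_zero_mem_orbitOf_eq (by norm_num)
    obtain ⟨k, g, rfl⟩ := hB.exists_eq_patternReps_image_add h0
    exact ⟨k, by rw [← hBA, orbitOf_image_add]⟩
  · rintro ⟨k, rfl⟩
    exact ⟨_, isPattern_patternReps k, rfl⟩

end Four

theorem stmt14 : Set.ncard (orbitsOfPatterns 4) = 12 := by
  rw [orbitsOfPatterns_four_eq_range, Set.ncard_range_of_injective orbitOf_patternReps_injective,
    Nat.card_eq_fintype_card, Fintype.card_fin]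
end
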